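/- arXiv:1705.09689 — 3 statements merged into one kernel-verified Lean document; each statement's English description precedes it below -/
import Mathlib

section
/- Existence of the complexification: let φ : ℂ^n → ℂ be real-analytic at a point p (analytic over ℝ at p, regarding ℂ^n as a real normed space). Then there exists a function Φ : ℂ^n × ℂ^n → ℂ that is complex-analytic at the point (p, conj p) and satisfies Φ(z, conj z) = φ(z) for all z in some neighborhood of p. -/
/-- Componentwise complex conjugation on `ℂ^n`. -/
def conjVec {n : ℕ} (z : Fin n → ℂ) : Fin n → ℂ := fun i => (starRingEnd ℂ) (z i)

/-!
In the real coordinates `(Re z, Im z) ∈ ℝ^{2n}`, the power series of `φ` at `p` is a series of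
`ℝ`-multilinear maps `P k`. Each `P k` extends `ℂ`-multilinearly through its values on the
standard basis, at the cost of a factor `(2n)^k` in norm, so the extended series still has positive
radius; its sum `Ψ` is holomorphic near `(Re p, Im p) ∈ ℂ^{2n}` and agrees with `φ` at nearby real
points. Then `Φ (z, w) = Ψ ((z + w) / 2, (z - w) / (2i))` works, since `(z + conj z) / 2 = Re z`
and `(z - conj z) / (2i) = Im z`.
-/

open scoped NNReal ENNReal Topology

namespace ContinuousMultilinearMap

variable {ι κ F : Type*} [Fintype ι] [DecidableEq ι] [Fintype κ] [DecidableEq κ]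
  [NormedAddCommGroup F] [NormedSpace ℂ F]

noncomputable def complexify (p : ContinuousMultilinearMap ℝ (fun _ : κ => ι → ℝ) F) :
    ContinuousMultilinearMap ℂ (fun _ : κ => ι → ℂ) F :=
  ∑ s : κ → ι, compContinuousLinearMap
    (ContinuousMultilinearMap.mkPiRing ℂ κ (p fun j => Pi.single (s j) 1))
    fun j => ContinuousLinearMap.proj (s j)

variable (p : ContinuousMultilinearMap ℝ (fun _ : κ => ι → ℝ) F)

theorem complexify_apply (m : κ → ι → ℂ) :
    p.complexify m = ∑ s : κ → ι, (∏ j, m j (s j)) • p fun j => Pi.single (s j) 1 := by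
  simp [complexify]

theorem complexify_ofReal (m : κ → ι → ℝ) :
    p.complexify (fun j i => (m j i : ℂ)) = p m := by
  conv_rhs => rw [show m = fun j => ∑ i, m j i • Pi.single i 1 from
    funext fun j => pi_eq_sum_univ' (m j)]
  simp only [complexify_apply, p.map_sum, p.map_smul_univ, ← Complex.ofReal_prod,
    Complex.coe_smul]

theorem norm_complexify_le :
    ‖p.complexify‖ ≤ Fintype.card ι ^ Fintype.card κ * ‖p‖ := by
  refine opNorm_le_bound (by positivity) fun m => ?_
  have hterm (s : κ → ι) :
      ‖(∏ j, m j (s j)) • p fun j => Pi.single (s j) 1‖ ≤ ‖p‖ * ∏ j, ‖m j‖ := by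
    rw [norm_smul, norm_prod, mul_comm]
    gcongr
    · calc ‖p fun j => Pi.single (s j) (1 : ℝ)‖
          ≤ ‖p‖ * ∏ j, ‖(Pi.single (s j) 1 : ι → ℝ)‖ := p.le_opNorm _
        _ = ‖p‖ := by simp [Pi.norm_single]
    · exact norm_le_pi_norm _ _
  calc ‖p.complexify m‖ ≤ ∑ s : κ → ι, ‖p‖ * ∏ j, ‖m j‖ := by
        rw [complexify_apply]
        exact norm_sum_le_of_le _ fun s _ => hterm s
    _ = _ := by simp [mul_assoc]

end ContinuousMultilinearMap

namespace FormalMultilinearSeries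

variable {ι F : Type*} [Fintype ι] [DecidableEq ι] [NormedAddCommGroup F] [NormedSpace ℂ F]

noncomputable def complexify (P : FormalMultilinearSeries ℝ (ι → ℝ) F) :
    FormalMultilinearSeries ℂ (ι → ℂ) F :=
  fun k => (P k).complexify

theorem complexify_apply_ofReal (P : FormalMultilinearSeries ℝ (ι → ℝ) F) (k : ℕ)
    (v : ι → ℝ) :
    P.complexify k (fun _ i => (v i : ℂ)) = P k fun _ => v :=
  (P k).complexify_ofReal _

theorem radius_complexify_pos {P : FormalMultilinearSeries ℝ (ι → ℝ) F} (hP : 0 < P.radius) :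
    0 < P.complexify.radius := by
  obtain ⟨r, hr0, hr⟩ := ENNReal.lt_iff_exists_nnreal_btwn.1 hP
  obtain ⟨C, -, hC⟩ := P.norm_mul_pow_le_of_lt_radius hr
  -- `card ι + 1` rather than `card ι`, which vanishes when `ι` is empty
  set N : ℝ≥0 := Fintype.card ι + 1
  have hN : 0 < N := by positivity
  refine lt_of_lt_of_le ?_ (P.complexify.le_radius_of_bound C (r := r / N) fun k => ?_)
  · exact ENNReal.coe_pos.2 (div_pos (ENNReal.coe_pos.1 hr0) hN)
  have hcard : (Fintype.card ι : ℝ) ^ k ≤ (N : ℝ) ^ k := by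
    gcongr
    simp [N]
  calc ‖P.complexify k‖ * ((r / N : ℝ≥0) : ℝ) ^ k
      ≤ ((N : ℝ) ^ k * ‖P k‖) * ((r / N : ℝ≥0) : ℝ) ^ k := by
        gcongr
        refine ((P k).norm_complexify_le).trans ?_
        simpa using mul_le_mul_of_nonneg_right hcard (norm_nonneg (P k))
    _ = ‖P k‖ * (r : ℝ) ^ k := by
        rw [NNReal.coe_div, div_pow]
        field_simp
    _ ≤ C := hC k

end FormalMultilinearSeries

theorem Complex.nnnorm_ofReal_pi {ι : Type*} [Fintype ι] (v : ι → ℝ) :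
    ‖fun i => (v i : ℂ)‖₊ = ‖v‖₊ := by
  simp [Pi.nnnorm_def]

theorem AnalyticAt.exists_complexification {ι F : Type*} [Fintype ι] [DecidableEq ι]
    [NormedAddCommGroup F] [NormedSpace ℂ F] [CompleteSpace F] {ψ : (ι → ℝ) → F}
    {x : ι → ℝ} (hψ : AnalyticAt ℝ ψ x) :
    ∃ Ψ : (ι → ℂ) → F, AnalyticAt ℂ Ψ (fun i => (x i : ℂ)) ∧
      ∀ᶠ y in 𝓝 x, Ψ (fun i => (y i : ℂ)) = ψ y := by
  obtain ⟨P, r, hP⟩ := hψ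
  have hQ := P.radius_complexify_pos (hP.r_pos.trans_le hP.r_le)
  have hΨ := (P.complexify.hasFPowerSeriesOnBall hQ).comp_sub (fun i => (x i : ℂ))
  refine ⟨_, by simpa using hΨ.analyticAt, ?_⟩
  filter_upwards [Metric.eball_mem_nhds x (lt_min hP.r_pos hQ)] with y hy
  rw [Metric.mem_eball, edist_eq_enorm_sub, lt_min_iff] at hy
  have hreal : HasSum (fun k => P k fun _ => y - x) (ψ y) := by
    simpa using hP.hasSum (y := y - x) (by simpa using hy.1)
  have hcomplex := hΨ.hasSum (y := fun i => ((y - x) i : ℂ)) (by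
    rw [Metric.mem_eball, edist_zero_right, enorm_eq_nnnorm, Complex.nnnorm_ofReal_pi]
    exact hy.2)
  simp only [FormalMultilinearSeries.complexify_apply_ofReal] at hcomplex
  convert hcomplex.unique hreal using 2
  ext i
  simp

section ReIm

open Complex ComplexConjugate

variable {ι : Type*}

noncomputable def reImCLM : (ι → ℂ) →L[ℝ] (ι ⊕ ι → ℝ) :=
  .pi <| Sum.elim (fun i => reCLM ∘L .proj i) (fun i => imCLM ∘L .proj i)

noncomputable def ofReImCLM : (ι ⊕ ι → ℝ) →L[ℝ] (ι → ℂ) :=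
  .pi fun i => ofRealCLM ∘L .proj (.inl i) + I • ofRealCLM ∘L .proj (.inr i)

noncomputable def complexReImCLM : (ι → ℂ) × (ι → ℂ) →L[ℂ] (ι ⊕ ι → ℂ) :=
  .pi <| Sum.elim
    (fun i => (2 : ℂ)⁻¹ • (.proj i ∘L .fst ℂ _ _ + .proj i ∘L .snd ℂ _ _))
    (fun i => (2 * I)⁻¹ • (.proj i ∘L .fst ℂ _ _ - .proj i ∘L .snd ℂ _ _))

theorem ofReImCLM_reImCLM (z : ι → ℂ) : ofReImCLM (reImCLM z) = z := by
  ext i; simp [ofReImCLM, reImCLM, mul_comm I, re_add_im]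

theorem complexReImCLM_conjVec {n : ℕ} (z : Fin n → ℂ) :
    complexReImCLM (z, conjVec z) = fun j => (reImCLM z j : ℂ) := by
  ext (i|i)
  · simp [complexReImCLM, reImCLM, conjVec, ← mul_add, add_conj]
  · simp [complexReImCLM, reImCLM, conjVec, sub_conj]
    linear_combination (-(z i).im : ℂ) * I_sq

end ReIm

/-- Existence of the complexification: if `φ : ℂ^n → ℂ` is real-analytic at `p`, then
there is `Φ : ℂ^n × ℂ^n → ℂ`, complex-analytic at `(p, conj p)`, with
`Φ (z, conj z) = φ z` for all `z` in a neighborhood of `p`. -/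
theorem complexification_exists (n : ℕ) (p : Fin n → ℂ) (φ : (Fin n → ℂ) → ℂ)
    (hφ : AnalyticAt ℝ φ p) :
    ∃ Φ : (Fin n → ℂ) × (Fin n → ℂ) → ℂ,
      AnalyticAt ℂ Φ (p, conjVec p) ∧ ∀ᶠ z in nhds p, Φ (z, conjVec z) = φ z := by
  have hψ : AnalyticAt ℝ (φ ∘ ofReImCLM) (reImCLM p) := by
    refine AnalyticAt.comp ?_ ((ofReImCLM (ι := Fin n)).analyticAt _)
    rwa [ofReImCLM_reImCLM]
  obtain ⟨Ψ, hΨ, hΨψ⟩ := hψ.exists_complexification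
  refine ⟨Ψ ∘ complexReImCLM, ?_, ?_⟩
  · refine AnalyticAt.comp ?_ ((complexReImCLM (ι := Fin n)).analyticAt _)
    rwa [complexReImCLM_conjVec]
  · filter_upwards [(reImCLM.continuous.tendsto p).eventually hΨψ] with z hz
    simpa [complexReImCLM_conjVec, ofReImCLM_reImCLM] using hz
end

section
/- Identity principle on the anti-diagonal: let U ⊆ ℂ^n be a nonempty connected open set and let V = U* = {conj z : z ∈ U}. Let g : ℂ^n × ℂ^n → ℂ be holomorphic on U × V. If g(z, conj z) = 0 for every z ∈ U, then g vanishes identically on U × V. -/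
/-!
The anti-diagonal `{(z, conj z)}` is the fixed-point set of the antilinear involution
`σ (z, w) = (conj w, conj z)` of `ℂ^n × ℂ^n`, so it plays the role of the real points.
On a convex `σ`-invariant open set `Ω`, every `p ∈ Ω` lies on the complex line
`w ↦ (p + σ p) / 2 + w • i (σ p - p) / 2`, which passes through `p` at `w = i`, through `σ p`
at `w = -i` (hence, by convexity, meets `Ω` in a real `w`), and whose real points are fixed by
`σ`; a holomorphic function vanishing on the fixed points therefore
vanishes along that line by the one-variable identity theorem. This applies to a small ball
around `(z₀, conj z₀)`, and the identity theorem on the connected set `U × U*` finishes.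
-/

open Set Filter Topology Metric Complex

section IdentityPrinciple

variable {E F : Type*} [NormedAddCommGroup E] [NormedSpace ℂ E]
  [NormedAddCommGroup F] [NormedSpace ℂ F]

theorem AnalyticOnNhd.eqOn_zero_of_real_eq_zero {f : ℂ → F} {W : Set ℂ}
    (hf : AnalyticOnNhd ℂ f W) (hW : IsOpen W) (hWc : IsPreconnected W) {x₀ : ℝ}
    (hx₀ : (x₀ : ℂ) ∈ W) (h0 : ∀ x : ℝ, (x : ℂ) ∈ W → f x = 0) : EqOn f 0 W := by
  refine hf.eqOn_zero_of_preconnected_of_frequently_eq_zero hWc hx₀ ?_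
  have hreal : Tendsto ((↑) : ℝ → ℂ) (𝓝[≠] x₀) (𝓝[≠] (x₀ : ℂ)) :=
    continuous_ofReal.continuousWithinAt.tendsto_nhdsWithin fun x hx => by simpa using hx
  have hmem : ∀ᶠ x : ℝ in 𝓝[≠] x₀, (x : ℂ) ∈ W :=
    eventually_nhdsWithin_of_eventually_nhds
      (continuous_ofReal.continuousAt.preimage_mem_nhds (hW.mem_nhds hx₀))
  exact hreal.frequently (hmem.mono h0).frequently

theorem AnalyticOnNhd.eqOn_zero_of_fixedPoints_eq_zero {σ : E →ₗ⋆[ℂ] E}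
    (hσ : Function.Involutive σ) {Ω : Set E} (hΩ : IsOpen Ω) (hΩc : Convex ℝ Ω)
    (hσΩ : MapsTo σ Ω Ω) {f : E → F} (hf : AnalyticOnNhd ℂ f Ω)
    (h0 : ∀ x ∈ Ω, σ x = x → f x = 0) : EqOn f 0 Ω := by
  intro p hp
  set c := (2 : ℂ)⁻¹ • (p + σ p)
  set v := (I / 2) • (σ p - p)
  have hc : σ c = c := by simp [c, hσ p, add_comm, map_ofNat]
  have hv : σ v = v := by
    simp only [v, LinearMap.map_smulₛₗ, map_sub, hσ p, map_div₀, conj_I, map_ofNat, neg_div,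
      neg_smul]
    rw [← smul_neg, neg_sub]
  have hI : c + I • v = p := by
    simp only [c, v, smul_smul, ← mul_div_assoc, I_mul_I]
    module
  have hnegI : c + (-I) • v = σ p := by
    simp only [c, v, smul_smul, neg_mul, ← mul_div_assoc, I_mul_I]
    module
  set W : Set ℂ := {w | c + w • v ∈ Ω}
  have hWc : Convex ℝ W :=
    (hΩc.translate_preimage_right c).linear_preimage
      ((LinearMap.toSpanSingleton ℂ E v).restrictScalars ℝ)
  have hIW : I ∈ W := by simpa [W, hI]
  have h0W : ((0 : ℝ) : ℂ) ∈ W := by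
    have hnegIW : -I ∈ W := by
      simp only [W, mem_ofPred_eq, hnegI]
      exact hσΩ hp
    simpa using hWc hIW hnegIW (by norm_num : (0 : ℝ) ≤ 1 / 2)
      (by norm_num : (0 : ℝ) ≤ 1 / 2) (by norm_num)
  have hL : ∀ w : ℂ, AnalyticAt ℂ (fun w : ℂ => c + w • v) w := fun w => by fun_prop
  have hline := AnalyticOnNhd.eqOn_zero_of_real_eq_zero (f := fun w => f (c + w • v))
    (fun w hw => (hf _ hw).comp_of_eq (hL w) rfl) (hΩ.preimage (by fun_prop))
    hWc.isPreconnected h0W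
    (fun x hx => h0 _ hx (by simp only [map_add, map_smulₛₗ, conj_ofReal, hc, hv]))
  simpa [hI] using hline hIW

end IdentityPrinciple

section StarSwap

variable {E : Type*} [AddCommMonoid E] [StarAddMonoid E] [Module ℂ E] [StarModule ℂ E]

variable (E) in
def starSwap : (E × E) ≃ₗ⋆[ℂ] E × E :=
  (LinearEquiv.prodComm ℂ E E).trans (starLinearEquiv ℂ)

@[simp]
theorem starSwap_apply (x : E × E) : starSwap E x = (star x.2, star x.1) := rfl

theorem starSwap_involutive : Function.Involutive (starSwap E) := fun x => by simp

theorem starSwap_eq_self_iff {x : E × E} : starSwap E x = x ↔ x.2 = star x.1 := by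
  rw [starSwap_apply, Prod.ext_iff]
  constructor
  · rintro ⟨h, -⟩
    rw [← h, star_star]
  · intro h
    simp [h]

end StarSwap

section AntiDiagonal

variable {E F : Type*} [NormedAddCommGroup E] [StarAddMonoid E] [NormedStarGroup E]
  [NormedSpace ℂ E] [StarModule ℂ E] [NormedAddCommGroup F] [NormedSpace ℂ F]

theorem dist_starSwap (x y : E × E) : dist (starSwap E x) (starSwap E y) = dist x y := by
  simp [Prod.dist_eq, max_comm]

theorem AnalyticOnNhd.eqOn_zero_ball_of_antidiagonal_eq_zero {z : E} {r : ℝ} {f : E × E → F}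
    (hf : AnalyticOnNhd ℂ f (ball (z, star z) r))
    (h0 : ∀ x, (x, star x) ∈ ball (z, star z) r → f (x, star x) = 0) :
    EqOn f 0 (ball (z, star z) r) := by
  have hc : starSwap E (z, star z) = (z, star z) := starSwap_eq_self_iff.2 rfl
  refine hf.eqOn_zero_of_fixedPoints_eq_zero (σ := (starSwap E).toLinearMap)
    starSwap_involutive isOpen_ball (convex_ball _ _) (fun x hx => ?_) (fun ⟨x, y⟩ hx hfix => ?_)
  · rw [mem_ball, ← hc]
    exact (dist_starSwap x _).trans_lt hx
  · obtain rfl : y = star x := starSwap_eq_self_iff.1 hfix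
    exact h0 x hx

end AntiDiagonal

theorem conjVec_eq_star {n : ℕ} : (conjVec : (Fin n → ℂ) → Fin n → ℂ) = star := rfl

/-- Identity principle on the anti-diagonal: if `U ⊆ ℂ^n` is a nonempty connected open set,
`V = U*` its mirror, `g` is holomorphic on `U × V` and `g (z, conj z) = 0` for every `z ∈ U`,
then `g` vanishes identically on `U × V`. -/
theorem vanish_on_antidiagonal (n : ℕ) (U : Set (Fin n → ℂ)) (hU : IsOpen U)
    (hconn : IsConnected U)
    (g : (Fin n → ℂ) × (Fin n → ℂ) → ℂ)
    (hg : AnalyticOnNhd ℂ g (U ×ˢ (conjVec '' U)))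
    (hz : ∀ z ∈ U, g (z, conjVec z) = 0) :
    ∀ x ∈ U ×ˢ (conjVec '' U), g x = 0 := by
  rw [conjVec_eq_star] at hg hz ⊢
  have hVo : IsOpen (star '' U) := by
    rw [star_involutive.image_eq_preimage_symm]
    exact hU.preimage continuous_star
  have hSc : IsPreconnected (U ×ˢ (star '' U)) :=
    (hconn.prod (hconn.image _ continuous_star.continuousOn)).isPreconnected
  obtain ⟨z₀, hz₀⟩ := hconn.nonempty
  have hc : (z₀, star z₀) ∈ U ×ˢ (star '' U) := ⟨hz₀, mem_image_of_mem _ hz₀⟩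
  obtain ⟨r, hr, hball⟩ := Metric.isOpen_iff.1 (hU.prod hVo) _ hc
  have hlocal : g =ᶠ[𝓝 (z₀, star z₀)] 0 := eventuallyEq_of_mem (ball_mem_nhds _ hr)
    ((hg.mono hball).eqOn_zero_ball_of_antidiagonal_eq_zero fun x hx => hz x (hball hx).1)
  exact fun x hx => hg.eqOn_zero_of_preconnected_of_eventuallyEq_zero hSc hc hlocal hx
end

section
/- Reality symmetry of the complexification: let φ : ℂ^n → ℂ be real-analytic at p (analytic over ℝ at p, regarding ℂ^n as a real normed space) and take only real values in a neighborhood of p. Let Φ : ℂ^n × ℂ^n → ℂ be complex-analytic at (p, conj p) with Φ(z, conj z) = φ(z) for all z near p. Then Φ(z, w) = conj(Φ(conj w, conj z)) for all (z, w) in some neighborhood of (p, conj p). -/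
namespace CRSAux

open Complex Filter Topology

variable {n : ℕ}

lemma conjVec_conjVec (z : Fin n → ℂ) : conjVec (conjVec z) = z := by
  funext i; simp [conjVec]

lemma conjVec_add (a b : Fin n → ℂ) : conjVec (a + b) = conjVec a + conjVec b := by
  funext i; simp [conjVec]

lemma conjVec_smul (c : ℂ) (a : Fin n → ℂ) :
    conjVec (c • a) = (starRingEnd ℂ) c • conjVec a := by
  funext i; simp [conjVec]

lemma nnnorm_conjVec (a : Fin n → ℂ) : ‖conjVec a‖₊ = ‖a‖₊ := by
  simp [Pi.nnnorm_def, conjVec]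

/-- The antiholomorphic swap `(z, w) ↦ (conj w, conj z)`. -/
def sig (x : (Fin n → ℂ) × (Fin n → ℂ)) : (Fin n → ℂ) × (Fin n → ℂ) :=
  (conjVec x.2, conjVec x.1)

lemma sig_add (a b : (Fin n → ℂ) × (Fin n → ℂ)) : sig (a + b) = sig a + sig b := by
  simp [sig, conjVec_add, Prod.ext_iff]

lemma sig_smul (c : ℂ) (a : (Fin n → ℂ) × (Fin n → ℂ)) :
    sig (c • a) = (starRingEnd ℂ) c • sig a := by
  simp [sig, conjVec_smul, Prod.ext_iff]

lemma sig_iota (z : Fin n → ℂ) : sig (z, conjVec z) = (z, conjVec z) := by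
  simp [sig, conjVec_conjVec]

lemma conjVec_sub (a b : Fin n → ℂ) : conjVec (a - b) = conjVec a - conjVec b := by
  funext i; simp [conjVec]

lemma sig_sub (a b : (Fin n → ℂ) × (Fin n → ℂ)) : sig (a - b) = sig a - sig b := by
  simp [sig, conjVec_sub, Prod.ext_iff]

lemma nnnorm_sig (a : (Fin n → ℂ) × (Fin n → ℂ)) : ‖sig a‖₊ = ‖a‖₊ := by
  simp [Prod.nnnorm_def', sig, nnnorm_conjVec, max_comm]
  rfl

/-- conjugation on `ℂ^n` as a continuous `ℝ`-linear map. -/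
noncomputable def conjCLM : (Fin n → ℂ) →L[ℝ] (Fin n → ℂ) :=
  ContinuousLinearMap.pi fun i =>
    (Complex.conjCLE : ℂ →L[ℝ] ℂ).comp (ContinuousLinearMap.proj i)

lemma conjCLM_apply (z : Fin n → ℂ) : conjCLM z = conjVec z := rfl

/-- `z ↦ (z, conj z)` as a continuous `ℝ`-linear map. -/
noncomputable def iotaL : (Fin n → ℂ) →L[ℝ] (Fin n → ℂ) × (Fin n → ℂ) :=
  (ContinuousLinearMap.id ℝ _).prod conjCLM

lemma iotaL_apply (z : Fin n → ℂ) : iotaL z = (z, conjVec z) := rfl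

end CRSAux

namespace CRSAux
open Complex

lemma decomp_aux (e : (Fin n → ℂ) × (Fin n → ℂ)) :
    e = ∑ j : Fin 4,
      (![1/2, -(Complex.I/2), 1/2, Complex.I/2] : Fin 4 → ℂ) j •
        ((![e.1, Complex.I • e.1, conjVec e.2, Complex.I • conjVec e.2] : Fin 4 → Fin n → ℂ) j,
          conjVec (![e.1, Complex.I • e.1, conjVec e.2, Complex.I • conjVec e.2] j)) := by
  refine Prod.ext ?_ ?_ <;> funext i <;>
    simp [Fin.sum_univ_four, conjVec, Complex.conj_I, map_mul, smul_eq_mul,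
      Pi.smul_apply, Prod.fst_sum, Prod.snd_sum] <;> ring_nf <;>
    simp [Complex.I_sq] <;> ring

lemma multilinear_eq_zero {k : ℕ}
    (M : MultilinearMap ℂ (fun _ : Fin k => (Fin n → ℂ) × (Fin n → ℂ)) ℂ)
    (H : ∀ u : Fin k → Fin n → ℂ, (M fun i => (u i, conjVec (u i))) = 0)
    (v : Fin k → (Fin n → ℂ) × (Fin n → ℂ)) : M v = 0 := by
  classical
  set c : Fin 4 → ℂ := ![1/2, -(Complex.I/2), 1/2, Complex.I/2] with hc
  set w : ((Fin n → ℂ) × (Fin n → ℂ)) → Fin 4 → (Fin n → ℂ) :=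
    fun e => ![e.1, Complex.I • e.1, conjVec e.2, Complex.I • conjVec e.2] with hw
  have hv : v = fun i => ∑ j : Fin 4, c j • (w (v i) j, conjVec (w (v i) j)) := by
    funext i; exact decomp_aux (v i)
  calc M v = M (fun i => ∑ j : Fin 4, c j • (w (v i) j, conjVec (w (v i) j))) := by rw [← hv]
    _ = ∑ r : Fin k → Fin 4, M fun i => c (r i) • (w (v i) (r i), conjVec (w (v i) (r i))) :=
        M.map_sum _
    _ = 0 := by
        refine Finset.sum_eq_zero fun r _ => ?_
        rw [M.map_smul_univ, H fun i => w (v i) (r i), smul_zero]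

end CRSAux

/-- Reality symmetry of the complexification: if `φ` is real-analytic at `p`, real-valued
near `p`, and `Φ` is a complexification of `φ` at `p`, then
`Φ (z, w) = conj (Φ (conj w, conj z))` near `(p, conj p)`. -/
theorem complexification_reality_symmetry (n : ℕ) (p : Fin n → ℂ)
    (φ : (Fin n → ℂ) → ℂ) (hφ : AnalyticAt ℝ φ p)
    (hreal : ∀ᶠ z in nhds p, (φ z).im = 0)
    (Φ : (Fin n → ℂ) × (Fin n → ℂ) → ℂ)
    (hΦ : AnalyticAt ℂ Φ (p, conjVec p))
    (heq : ∀ᶠ z in nhds p, Φ (z, conjVec z) = φ z) :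
    ∀ᶠ x in nhds (p, conjVec p),
      Φ x = (starRingEnd ℂ) (Φ (conjVec x.2, conjVec x.1)) := by
  classical
  open CRSAux in
  obtain ⟨s, r, hrb⟩ : ∃ s r, HasFPowerSeriesOnBall Φ s (p, conjVec p) r := by
    obtain ⟨s, hs⟩ := hΦ; obtain ⟨r, hr⟩ := hs; exact ⟨s, r, hr⟩
  set q : (Fin n → ℂ) × (Fin n → ℂ) := (p, conjVec p) with hqdef
  set U : Set ((Fin n → ℂ) × (Fin n → ℂ)) := EMetric.ball q r with hUdef
  have hUo : IsOpen U := EMetric.isOpen_ball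
  have hqU : q ∈ U := EMetric.mem_ball_self hrb.r_pos
  have hUuC : UniqueDiffOn ℂ U := hUo.uniqueDiffOn
  have hUuR : UniqueDiffOn ℝ U := hUo.uniqueDiffOn
  have hAN : AnalyticOnNhd ℂ Φ U := hrb.analyticOnNhd
  have hCDc : ContDiffOn ℂ ⊤ Φ U := hAN.contDiffOn hUuC
  have hCDr : ContDiffOn ℝ (⊤ : ℕ∞) Φ U := (hAN.restrictScalars).contDiffOn hUuR
  -- the diagonal embedding
  have hip : (CRSAux.iotaL : (Fin n → ℂ) →L[ℝ] _) p = q := rfl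
  set V : Set (Fin n → ℂ) := (CRSAux.iotaL (n := n)) ⁻¹' U with hVdef
  have hVo : IsOpen V := hUo.preimage CRSAux.iotaL.continuous
  have hpV : p ∈ V := by simp only [hVdef, Set.mem_preimage, hip]; exact hqU
  have hVuR : UniqueDiffOn ℝ V := hVo.uniqueDiffOn
  -- key derivative identity
  have keyD : ∀ (k : ℕ) (v : Fin k → (Fin n → ℂ) × (Fin n → ℂ)),
      iteratedFDeriv ℂ k Φ q v =
        (starRingEnd ℂ) (iteratedFDeriv ℂ k Φ q fun i => CRSAux.sig (v i)) := by
    intro k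
    -- step 1 : real vs complex iterated derivatives
    have hRC : iteratedFDerivWithin ℝ k Φ U q =
        (iteratedFDerivWithin ℂ k Φ U q).restrictScalars ℝ := by
      have hT := (hCDc.ftaylorSeriesWithin hUuC).restrictScalars (𝕜 := ℝ)
      have h2 := hT.eq_iteratedFDerivWithin_of_uniqueDiffOn (m := k) (mod_cast le_top) hUuR hqU
      rw [← h2]
      simp [ftaylorSeriesWithin, FormalMultilinearSeries.restrictScalars]
    -- step 2 : within vs global
    have hWG : iteratedFDerivWithin ℂ k Φ U q = iteratedFDeriv ℂ k Φ q :=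
      iteratedFDerivWithin_of_isOpen k hUo hqU
    -- step 3 : composition on the right with iotaL
    have hcompr : iteratedFDerivWithin ℝ k (Φ ∘ CRSAux.iotaL) V p =
        (iteratedFDerivWithin ℝ k Φ U (CRSAux.iotaL p)).compContinuousLinearMap
          fun _ => CRSAux.iotaL :=
      ContinuousLinearMap.iteratedFDerivWithin_comp_right CRSAux.iotaL hCDr hUuR hVuR
        (by rw [hip]; exact hqU) (mod_cast le_top)
    -- step 4 : composition on the left with conjugation
    have hcompl : iteratedFDerivWithin ℝ k (⇑Complex.conjCLE ∘ (Φ ∘ CRSAux.iotaL)) V p =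
        (Complex.conjCLE : ℂ →L[ℝ] ℂ).compContinuousMultilinearMap
          (iteratedFDerivWithin ℝ k (Φ ∘ CRSAux.iotaL) V p) :=
      ContinuousLinearEquiv.iteratedFDerivWithin_comp_left Complex.conjCLE _ hVuR hpV k
    -- step 5 : the two functions agree near p
    have heqf : (Φ ∘ CRSAux.iotaL) =ᶠ[nhds p] (⇑Complex.conjCLE ∘ (Φ ∘ CRSAux.iotaL)) := by
      filter_upwards [heq, hreal] with z h1 h2
      simp only [Function.comp_apply, CRSAux.iotaL_apply, h1, Complex.conjCLE_apply]
      exact (Complex.conj_eq_iff_im.2 h2).symm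
    have heqd : iteratedFDerivWithin ℝ k (Φ ∘ CRSAux.iotaL) V p =
        iteratedFDerivWithin ℝ k (⇑Complex.conjCLE ∘ (Φ ∘ CRSAux.iotaL)) V p :=
      (heqf.filter_mono nhdsWithin_le_nhds).iteratedFDerivWithin_eq heqf.self_of_nhds k
    -- combine : reality on iota tuples
    have hreal' : ∀ u : Fin k → (Fin n → ℂ),
        (iteratedFDeriv ℂ k Φ q fun i => (u i, conjVec (u i))) =
          (starRingEnd ℂ) (iteratedFDeriv ℂ k Φ q fun i => (u i, conjVec (u i))) := by
      intro u
      have e1 : (iteratedFDeriv ℂ k Φ q fun i => (u i, conjVec (u i))) =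
          iteratedFDerivWithin ℝ k (Φ ∘ CRSAux.iotaL) V p u := by
        rw [hcompr, hip, hRC]
        simp [ContinuousMultilinearMap.compContinuousLinearMap_apply, CRSAux.iotaL_apply, hWG]
      have e2 : iteratedFDerivWithin ℝ k (Φ ∘ CRSAux.iotaL) V p u =
          (starRingEnd ℂ) (iteratedFDerivWithin ℝ k (Φ ∘ CRSAux.iotaL) V p u) := by
        conv_lhs => rw [heqd, hcompl]
        simp [Complex.conjCLE_apply]
      calc (iteratedFDeriv ℂ k Φ q fun i => (u i, conjVec (u i)))
          = iteratedFDerivWithin ℝ k (Φ ∘ CRSAux.iotaL) V p u := e1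
        _ = (starRingEnd ℂ) (iteratedFDerivWithin ℝ k (Φ ∘ CRSAux.iotaL) V p u) := e2
        _ = (starRingEnd ℂ) (iteratedFDeriv ℂ k Φ q fun i => (u i, conjVec (u i))) :=
            congrArg _ e1.symm
    -- build the multilinear map and kill it
    intro v
    set D : ContinuousMultilinearMap ℂ (fun _ : Fin k => (Fin n → ℂ) × (Fin n → ℂ)) ℂ :=
      iteratedFDeriv ℂ k Φ q with hD
    set M : MultilinearMap ℂ (fun _ : Fin k => (Fin n → ℂ) × (Fin n → ℂ)) ℂ :=
      { toFun := fun v => D v - (starRingEnd ℂ) (D fun i => CRSAux.sig (v i))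
        map_update_add' := by
          intro _ w i x y
          have e : ∀ z : (Fin n → ℂ) × (Fin n → ℂ),
              (fun j => CRSAux.sig (Function.update w i z j)) =
                Function.update (fun j => CRSAux.sig (w j)) i (CRSAux.sig z) := by
            intro z; funext j
            rcases eq_or_ne j i with rfl | h
            · simp
            · simp [Function.update_of_ne h]
          rw [e, e, e, CRSAux.sig_add, D.map_update_add, D.map_update_add, map_add]
          ring
        map_update_smul' := by
          intro _ w i c x
          have e : ∀ z : (Fin n → ℂ) × (Fin n → ℂ),
              (fun j => CRSAux.sig (Function.update w i z j)) =
                Function.update (fun j => CRSAux.sig (w j)) i (CRSAux.sig z) := by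
            intro z; funext j
            rcases eq_or_ne j i with rfl | h
            · simp
            · simp [Function.update_of_ne h]
          rw [e, e, CRSAux.sig_smul, D.map_update_smul, D.map_update_smul]
          simp only [smul_eq_mul, map_mul, Complex.conj_conj, RingHom.id_apply]
          ring } with hM
    have hMz : M v = 0 := by
      refine CRSAux.multilinear_eq_zero M (fun u => ?_) v
      have : (fun i => CRSAux.sig ((u i, conjVec (u i)))) =
          fun i => (u i, conjVec (u i)) := by
        funext i; exact CRSAux.sig_iota (u i)
      show D _ - (starRingEnd ℂ) (D _) = 0
      rw [this, ← hreal' u, sub_self]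
    have h0 : D v - (starRingEnd ℂ) (D fun i => CRSAux.sig (v i)) = 0 := hMz
    exact sub_eq_zero.1 h0
  -- final assembly
  have hsigq : CRSAux.sig q = q := CRSAux.sig_iota p
  filter_upwards [EMetric.ball_mem_nhds q hrb.r_pos] with x hx
  have hxs : CRSAux.sig x ∈ Metric.eball q r := by
    have hsub : CRSAux.sig x - q = CRSAux.sig (x - q) := by
      rw [CRSAux.sig_sub, hsigq]
    have : edist (CRSAux.sig x) q = edist x q := by
      rw [edist_nndist, edist_nndist, nndist_eq_nnnorm, nndist_eq_nnnorm, hsub,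
        CRSAux.nnnorm_sig]
    rw [Metric.mem_eball, this]
    exact hx
  have hsum1 := hrb.hasSum_sub hx
  have hsum2 := hrb.hasSum_sub hxs
  have hdiff : CRSAux.sig x - q = CRSAux.sig (x - q) := by
    rw [CRSAux.sig_sub, hsigq]
  have hsum3 : HasSum (fun k => (starRingEnd ℂ) (s k fun _ => CRSAux.sig (x - q)))
      ((starRingEnd ℂ) (Φ (CRSAux.sig x))) := by
    have h := hsum2.map (starRingEnd ℂ).toAddMonoidHom Complex.continuous_conj
    rw [hdiff] at h
    exact h
  have hterm : ∀ k, (starRingEnd ℂ) (s k fun _ => CRSAux.sig (x - q)) = s k fun _ => x - q := by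
    intro k
    have h1 := hrb.factorial_smul (x - q) k
    have h2 := hrb.factorial_smul (CRSAux.sig (x - q)) k
    have h3 := keyD k (fun _ => x - q)
    have h4 : (starRingEnd ℂ) ((Nat.factorial k) • (s k fun _ => CRSAux.sig (x - q))) =
        (starRingEnd ℂ) (iteratedFDeriv ℂ k Φ q fun _ => CRSAux.sig (x - q)) :=
      congrArg _ h2
    rw [map_nsmul] at h4
    have h5 : (Nat.factorial k) • (starRingEnd ℂ) (s k fun _ => CRSAux.sig (x - q)) =
        (Nat.factorial k) • (s k fun _ => x - q) := by
      rw [h4, ← h3, h1]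
    have hk : ((Nat.factorial k : ℕ) : ℂ) ≠ 0 := Nat.cast_ne_zero.2 (Nat.factorial_ne_zero k)
    rw [nsmul_eq_mul, nsmul_eq_mul] at h5
    exact mul_left_cancel₀ hk h5
  have hsum3' : HasSum (fun k => s k fun _ => x - q) ((starRingEnd ℂ) (Φ (CRSAux.sig x))) := by
    rw [show (fun k => s k fun _ => x - q) =
      (fun k => (starRingEnd ℂ) (s k fun _ => CRSAux.sig (x - q))) from funext fun k => (hterm k).symm]
    exact hsum3
  have : Φ x = (starRingEnd ℂ) (Φ (CRSAux.sig x)) := hsum1.unique hsum3'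
  exact this
end
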